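/- arXiv:2109.03005 — 2 statements merged into one kernel-verified Lean document; each statement's English description precedes it below -/
import Mathlib

section
/- Let G be a connected graph with a weight-equitable partition {V₁,...,Vₘ} and largest adjacency eigenvalue λ₁. Then the vector x = (‖ρ(V₁)‖, ..., ‖ρ(Vₘ)‖)ᵀ is an eigenvector of the normalized weight-quotient matrix B̄* with eigenvalue λ₁. -/
open Finset Matrix

variable {V : Type*}

/-- The weight-intersection number `b*` of vertex `u` with respect to cell `D`,
for weight vector `ν`. -/
noncomputable def wInt [Fintype V] (G : SimpleGraph V) [DecidableRel G.Adj] (ν : V → ℝ)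
    (D : Finset V) (u : V) : ℝ :=
  (∑ v ∈ D, if G.Adj u v then ν v else 0) / ν u

/-- `Vc` lists the cells of a partition of the vertex set. -/
def IsPartition [Fintype V] {m : ℕ} (Vc : Fin m → Finset V) : Prop :=
  ∀ v : V, ∃! i : Fin m, v ∈ Vc i

/-- The partition with cells `Vc` is weight-equitable w.r.t. the weights `ν`. -/
def IsWeightEquitable [Fintype V] (G : SimpleGraph V) [DecidableRel G.Adj] (ν : V → ℝ)
    {m : ℕ} (Vc : Fin m → Finset V) : Prop :=
  ∀ i j : Fin m, ∀ u ∈ Vc i, ∀ u' ∈ Vc i, wInt G ν (Vc j) u = wInt G ν (Vc j) u'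

/-- The partition with cells `Vc` is equitable. -/
def IsEquitable [Fintype V] [DecidableEq V] (G : SimpleGraph V) [DecidableRel G.Adj]
    {m : ℕ} (Vc : Fin m → Finset V) : Prop :=
  ∀ i j : Fin m, ∀ u ∈ Vc i, ∀ u' ∈ Vc i,
    ((Vc j).filter (fun v => G.Adj u v)).card = ((Vc j).filter (fun v => G.Adj u' v)).card

/-!
`S̄` sends the vector of cell norms `x` to `ν` and `S̄ᵀ` sends `ν` back to `x`, so
`B̄ x = S̄ᵀ A S̄ x = S̄ᵀ A ν = λ S̄ᵀ ν = λ x`.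
-/

variable {ι : Type*}

theorem Matrix.mul_mul_mulVec_eq_smul_of_mulVec_eq {R m n : Type*} [Fintype m] [Fintype n]
    [CommSemiring R] {A : Matrix n n R} {B : Matrix m n R} {S : Matrix n m R}
    {x : m → R} {v : n → R} {μ : R}
    (hS : S *ᵥ x = v) (hA : A *ᵥ v = μ • v) (hB : B *ᵥ v = x) :
    (B * A * S) *ᵥ x = μ • x := by
  rw [← mulVec_mulVec, ← mulVec_mulVec, hS, hA, mulVec_smul, hB]

/-- `‖ρ(s)‖`, the norm of the restriction of the weight vector `ν` to `s`. -/
noncomputable def cellNorm (ν : V → ℝ) (s : Finset V) : ℝ :=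
  Real.sqrt (∑ w ∈ s, ν w ^ 2)

/-- The normalized weight-characteristic matrix `S̄`, whose `i`-th column is `ρ(Vᵢ) / ‖ρ(Vᵢ)‖`. -/
noncomputable def weightCharMatrix [DecidableEq V] (ν : V → ℝ) (Vc : ι → Finset V) :
    Matrix V ι ℝ :=
  fun u i => if u ∈ Vc i then ν u / cellNorm ν (Vc i) else 0

-- If `‖ρ(s)‖ = 0` then `ν` vanishes on `s`, so the junk value `ν u / 0 = 0` is harmless.
theorem div_cellNorm_mul_cellNorm {ν : V → ℝ} {s : Finset V} {u : V} (hu : u ∈ s) :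
    ν u / cellNorm ν s * cellNorm ν s = ν u := by
  by_cases h : cellNorm ν s = 0
  · have hsq : ∀ w ∈ s, 0 ≤ ν w ^ 2 := fun w _ => sq_nonneg (ν w)
    have hsum : ∑ w ∈ s, ν w ^ 2 = 0 := (Real.sqrt_eq_zero (sum_nonneg hsq)).1 h
    have hνu : ν u = 0 := pow_eq_zero_iff two_ne_zero |>.1 <|
      (sum_eq_zero_iff_of_nonneg hsq).1 hsum u hu
    simp [hνu]
  · exact div_mul_cancel₀ _ h

theorem weightCharMatrix_mulVec_cellNorm [Fintype V] [DecidableEq V] {m : ℕ} (ν : V → ℝ)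
    {Vc : Fin m → Finset V} (hpart : IsPartition Vc) :
    weightCharMatrix ν Vc *ᵥ (fun i => cellNorm ν (Vc i)) = ν := by
  funext u
  obtain ⟨i, hi, huniq⟩ := hpart u
  rw [mulVec, dotProduct, sum_eq_single i]
  · simp only [weightCharMatrix, hi, if_true]
    exact div_cellNorm_mul_cellNorm hi
  · intro j _ hj
    have hu : u ∉ Vc j := fun h => hj (huniq j h)
    simp [weightCharMatrix, hu]
  · simp

theorem weightCharMatrix_transpose_mulVec [Fintype V] [DecidableEq V] (ν : V → ℝ)
    (Vc : ι → Finset V) :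
    (weightCharMatrix ν Vc)ᵀ *ᵥ ν = fun i => cellNorm ν (Vc i) := by
  funext i
  have hterm : ∀ u, weightCharMatrix ν Vc u i * ν u =
      if u ∈ Vc i then ν u ^ 2 / cellNorm ν (Vc i) else 0 := by
    intro u
    simp only [weightCharMatrix]
    split_ifs <;> ring
  simp only [mulVec, dotProduct, transpose_apply, hterm]
  rw [sum_ite_mem, univ_inter, ← sum_div]
  exact Real.div_sqrt

theorem norm_vector_is_eigenvector_of_weight_quotient_general
    [Fintype V] [DecidableEq V] (G : SimpleGraph V) [DecidableRel G.Adj]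
    (ν : V → ℝ) (lam : ℝ)
    (heig : (G.adjMatrix ℝ).mulVec ν = lam • ν)
    {m : ℕ} (Vc : Fin m → Finset V)
    (hpart : IsPartition Vc) :
    let Sbar : Matrix V (Fin m) ℝ :=
      fun u i => if u ∈ Vc i then ν u / Real.sqrt (∑ w ∈ Vc i, (ν w) ^ 2) else 0
    let Bbar : Matrix (Fin m) (Fin m) ℝ := Sbarᵀ * G.adjMatrix ℝ * Sbar
    Bbar.mulVec (fun i => Real.sqrt (∑ w ∈ Vc i, (ν w) ^ 2)) =
      lam • (fun i => Real.sqrt (∑ w ∈ Vc i, (ν w) ^ 2)) :=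
  mul_mul_mulVec_eq_smul_of_mulVec_eq (weightCharMatrix_mulVec_cellNorm ν hpart) heig
    (weightCharMatrix_transpose_mulVec ν Vc)

/-- The vector of cell norms `(‖ρ(V₁)‖, …, ‖ρ(Vₘ)‖)` is an eigenvector of the
normalized weight-quotient matrix with eigenvalue `lam = λ₁`. -/
theorem norm_vector_is_eigenvector_of_weight_quotient
    [Fintype V] [DecidableEq V] (G : SimpleGraph V) [DecidableRel G.Adj]
    (hG : G.Connected) (ν : V → ℝ) (lam : ℝ)
    (hν : ∀ v, 0 < ν v)
    (heig : (G.adjMatrix ℝ).mulVec ν = lam • ν)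
    (hmax : ∀ (μ : ℝ) (x : V → ℝ), x ≠ 0 → (G.adjMatrix ℝ).mulVec x = μ • x → μ ≤ lam)
    {m : ℕ} (Vc : Fin m → Finset V)
    (hpart : IsPartition Vc) (hne : ∀ i, (Vc i).Nonempty)
    (hWE : IsWeightEquitable G ν Vc) :
    let Sbar : Matrix V (Fin m) ℝ :=
      fun u i => if u ∈ Vc i then ν u / Real.sqrt (∑ w ∈ Vc i, (ν w) ^ 2) else 0
    let Bbar : Matrix (Fin m) (Fin m) ℝ := Sbarᵀ * G.adjMatrix ℝ * Sbar
    Bbar.mulVec (fun i => Real.sqrt (∑ w ∈ Vc i, (ν w) ^ 2)) =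
      lam • (fun i => Real.sqrt (∑ w ∈ Vc i, (ν w) ^ 2)) :=
  norm_vector_is_eigenvector_of_weight_quotient_general G ν lam heig Vc hpart
end

section
/- Let G be a connected cograph on n vertices. Then G has a fixed-point-free involutionary automorphism if and only if G admits a weight-equitable partition into n/2 cells of size 2, which is moreover automatically equitable. -/
/-!
An automorphism `γ` carries the Perron vector `ν` to a positive eigenvector for the same
eigenvalue; the Perron eigenspace of a connected graph is a line, and `γ` preserves `∑ ν`, so
`ν ∘ γ = ν`. Hence the orbits of a fixed-point-free involutive automorphism form a
weight-equitable partition into pairs.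

Conversely, let `x ↦ x'` swap the two vertices of each cell. If `x ~ y` but `x' ≁ y'`, comparing
the weights that `x, x'` send into `{y, y'}` (and `y, y'` into `{x, x'}`) forces `x' ~ y` and
`x ~ y'`. Then `y' x y x'` is an induced `P₄` unless `x ~ x'` or `y ~ y'`; but an edge inside a
cell forces equal weights on it, which contradicts the same comparison. So the swap is an
automorphism, and a partition into the orbits of an automorphism is equitable.
-/

open Finset Matrix

variable {V : Type*}

/-- A cograph: a simple graph with no induced path on four vertices. -/
def IsCograph (G : SimpleGraph V) : Prop :=
  ∀ a b c d : V, a ≠ b → a ≠ c → a ≠ d → b ≠ c → b ≠ d → c ≠ d →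
    ¬(G.Adj a b ∧ G.Adj b c ∧ G.Adj c d ∧ ¬G.Adj a c ∧ ¬G.Adj b d ∧ ¬G.Adj a d)

namespace SimpleGraph

lemma Preconnected.forall_of_adj {G : SimpleGraph V} (hG : G.Preconnected) {p : V → Prop}
    (hstep : ∀ v w, G.Adj v w → p v → p w) {u : V} (hu : p u) (v : V) : p v := by
  obtain ⟨q⟩ := hG u v
  induction q with
  | nil => exact hu
  | cons h _ ih => exact ih (hstep _ _ h hu)

lemma adjMatrix_submatrix_iso {G : SimpleGraph V} [DecidableRel G.Adj] (γ : G ≃g G) :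
    (G.adjMatrix ℝ).submatrix γ γ = G.adjMatrix ℝ := by
  ext v w
  simp [adjMatrix_apply, γ.map_adj_iff]

variable [Fintype V] {G : SimpleGraph V} [DecidableRel G.Adj] {lam : ℝ}

lemma Preconnected.eq_zero_of_adjMatrix_mulVec_eq_smul (hG : G.Preconnected) {w : V → ℝ}
    (hw : 0 ≤ w) (heig : G.adjMatrix ℝ *ᵥ w = lam • w) {u : V} (hu : w u = 0) : w = 0 := by
  funext v
  refine hG.forall_of_adj (p := fun v => w v = 0) (fun v z hvz hv => ?_) hu v
  have hsum : ∑ z ∈ G.neighborFinset v, w z = 0 := by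
    simpa [hv] using congrFun heig v
  exact (Finset.sum_eq_zero_iff_of_nonneg fun z _ => hw z).mp hsum z (by simpa using hvz)

lemma Connected.exists_eq_smul_of_adjMatrix_mulVec_eq_smul (hG : G.Connected) {ν μ : V → ℝ}
    (hν : ∀ v, 0 < ν v) (hνeig : G.adjMatrix ℝ *ᵥ ν = lam • ν)
    (hμeig : G.adjMatrix ℝ *ᵥ μ = lam • μ) : ∃ c : ℝ, μ = c • ν := by
  have := hG.nonempty
  obtain ⟨u, -, hmin⟩ := exists_min_image univ (fun v => μ v / ν v) univ_nonempty
  set c := μ u / ν u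
  have hzero : μ - c • ν = 0 := by
    refine hG.preconnected.eq_zero_of_adjMatrix_mulVec_eq_smul (lam := lam) (u := u)
      (fun v => ?_) ?_ ?_
    · simpa [sub_nonneg] using (le_div_iff₀ (hν v)).mp (hmin v (mem_univ v))
    · rw [mulVec_sub, mulVec_smul, hμeig, hνeig, smul_sub, smul_comm]
    · simp [c, div_mul_cancel₀ _ (hν u).ne']
  exact ⟨c, sub_eq_zero.mp hzero⟩

lemma Connected.comp_iso_eq_of_adjMatrix_mulVec_eq_smul (hG : G.Connected) {ν : V → ℝ}
    (hν : ∀ v, 0 < ν v) (heig : G.adjMatrix ℝ *ᵥ ν = lam • ν) (γ : G ≃g G) : ν ∘ γ = ν := by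
  have hγeig : G.adjMatrix ℝ *ᵥ (ν ∘ γ) = lam • (ν ∘ γ) := by
    conv_lhs => rw [← adjMatrix_submatrix_iso γ]
    rw [show (γ : V → V) = γ.toEquiv from rfl, submatrix_mulVec_equiv, Function.comp_assoc,
      Equiv.self_comp_symm, Function.comp_id, heig]
    rfl
  obtain ⟨c, hc⟩ := hG.exists_eq_smul_of_adjMatrix_mulVec_eq_smul hν heig hγeig
  have := hG.nonempty
  have hsum : ∑ v, ν v = c * ∑ v, ν v := by
    calc ∑ v, ν v = ∑ v, ν (γ v) := (γ.toEquiv.sum_comp ν).symm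
      _ = c * ∑ v, ν v := by rw [mul_sum]; exact sum_congr rfl fun v _ => congrFun hc v
  have hpos : 0 < ∑ v, ν v := sum_pos (fun v _ => hν v) univ_nonempty
  have hc1 : c = 1 := by nlinarith
  rw [hc, hc1, one_smul]

end SimpleGraph

section Pairs

variable [DecidableEq V] {m : ℕ} {Vc : Fin m → Finset V}

lemma mem_pair_iff_pair_eq {γ : V → V} (hinv : Function.Involutive γ) {v z : V} :
    v ∈ ({z, γ z} : Finset V) ↔ ({z, γ z} : Finset V) = {v, γ v} := by
  constructor
  · intro hv
    rcases mem_insert.mp hv with rfl | hv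
    · rfl
    rw [mem_singleton.mp hv, hinv, pair_comm]
  · intro h
    rw [h]
    exact mem_insert_self _ _

lemma apply_mem_of_cells_eq_pair {γ : V → V} (hcell : ∀ i, ∀ v ∈ Vc i, Vc i = {v, γ v})
    (i : Fin m) : ∀ v ∈ Vc i, γ v ∈ Vc i := fun v hv => by
  rw [hcell i v hv]
  exact mem_insert_of_mem (mem_singleton_self _)

variable [Fintype V]

lemma IsPartition.exists_partner (hpart : IsPartition Vc) (hc2 : ∀ i, #(Vc i) = 2) :
    ∃ g : V → V, (∀ v, g v ≠ v) ∧ Function.Involutive g ∧ ∀ i, ∀ v ∈ Vc i, Vc i = {v, g v} := by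
  choose idx hmem huni using hpart
  have hcard : ∀ v, #((Vc (idx v)).erase v) = 1 := fun v => by
    rw [card_erase_of_mem (hmem v), hc2]
  choose g hg using fun v => card_eq_one.mp (hcard v)
  have hcell : ∀ i, ∀ v ∈ Vc i, Vc i = {v, g v} := by
    intro i v hv
    rw [huni v i hv, ← insert_erase (hmem v), hg v]
  have hgne : ∀ v, g v ≠ v := fun v =>
    (mem_erase.mp ((hg v).symm ▸ mem_singleton_self (g v))).1
  refine ⟨g, hgne, fun v => ?_, hcell⟩
  have hggv : g (g v) ∈ ({v, g v} : Finset V) := by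
    rw [← hcell _ v (hmem v)]
    exact apply_mem_of_cells_eq_pair hcell _ _ (apply_mem_of_cells_eq_pair hcell _ v (hmem v))
  simpa [hgne (g v)] using hggv

lemma exists_pair_partition {γ : V → V} (hfpf : ∀ v, γ v ≠ v) (hinv : Function.Involutive γ) :
    ∃ (m : ℕ) (Vc : Fin m → Finset V), 2 * m = Fintype.card V ∧ IsPartition Vc ∧
      (∀ i, #(Vc i) = 2) ∧ ∀ i, ∀ v ∈ Vc i, Vc i = {v, γ v} := by
  set O := univ.image fun v => ({v, γ v} : Finset V)
  have hO : ∀ o : O, ∃ z, (o : Finset V) = {z, γ z} := fun o => by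
    obtain ⟨z, -, hz⟩ := mem_image.mp o.2
    exact ⟨z, hz.symm⟩
  refine ⟨#O, fun i => O.equivFin.symm i, ?_, fun v => ?_, fun i => ?_, fun i v hv => ?_⟩
  · calc 2 * #O = ∑ o ∈ O, #{x | ({x, γ x} : Finset V) = o} := by
          rw [sum_congr rfl fun o ho => ?_, sum_const, smul_eq_mul, mul_comm]
          obtain ⟨z, rfl⟩ := hO ⟨o, ho⟩
          have hfiber : ({x | ({x, γ x} : Finset V) = {z, γ z}} : Finset V) = {z, γ z} := by
            ext x
            rw [mem_filter, eq_comm, ← mem_pair_iff_pair_eq hinv]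
            simp
          rw [hfiber]
          exact card_pair (hfpf z).symm
      _ = Fintype.card V := (card_eq_sum_card_image _ univ).symm
  · refine ⟨O.equivFin ⟨{v, γ v}, mem_image_of_mem _ (mem_univ v)⟩, by simp, fun j hj => ?_⟩
    rw [← Equiv.symm_apply_eq]
    dsimp only at hj
    obtain ⟨z, hz⟩ := hO (O.equivFin.symm j)
    rw [hz, mem_pair_iff_pair_eq hinv] at hj
    exact Subtype.ext (hz.trans hj)
  · obtain ⟨z, hz⟩ := hO (O.equivFin.symm i)
    dsimp only
    rw [hz]
    exact card_pair (hfpf z).symm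
  · obtain ⟨z, hz⟩ := hO (O.equivFin.symm i)
    dsimp only at hv ⊢
    rw [hz] at hv ⊢
    exact (mem_pair_iff_pair_eq hinv).mp hv

end Pairs

section Automorphism

variable {G : SimpleGraph V}

lemma map_iso_eq_of_forall_mem (γ : G ≃g G) {D : Finset V} (hD : ∀ v ∈ D, γ v ∈ D) :
    D.map γ.toEquiv.toEmbedding = D :=
  map_eq_of_subset fun _ hx => by
    obtain ⟨v, hv, rfl⟩ := mem_map.mp hx
    exact hD v hv

variable [DecidableRel G.Adj]

lemma card_filter_adj_iso_apply (γ : G ≃g G) {D : Finset V} (hD : ∀ v ∈ D, γ v ∈ D) (u : V) :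
    #{v ∈ D | G.Adj (γ u) v} = #{v ∈ D | G.Adj u v} := by
  conv_lhs => rw [← map_iso_eq_of_forall_mem γ hD, filter_map, card_map]
  simp [γ.map_adj_iff]

variable [Fintype V]

lemma wInt_iso_apply (γ : G ≃g G) {ν : V → ℝ} (hνγ : ∀ v, ν (γ v) = ν v) {D : Finset V}
    (hD : ∀ v ∈ D, γ v ∈ D) (u : V) : wInt G ν D (γ u) = wInt G ν D u := by
  unfold wInt
  conv_lhs => rw [← map_iso_eq_of_forall_mem γ hD, sum_map]
  simp [γ.map_adj_iff, hνγ]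

variable [DecidableEq V] {m : ℕ} {Vc : Fin m → Finset V}

lemma isEquitable_of_cells_eq_pair (γ : G ≃g G) (hcell : ∀ i, ∀ v ∈ Vc i, Vc i = {v, γ v}) :
    IsEquitable G Vc := by
  intro i j u hu u' hu'
  rw [hcell i u hu, mem_insert, mem_singleton] at hu'
  rcases hu' with rfl | rfl
  · rfl
  · exact (card_filter_adj_iso_apply γ (apply_mem_of_cells_eq_pair hcell j) u).symm

lemma isWeightEquitable_of_cells_eq_pair (γ : G ≃g G) {ν : V → ℝ} (hνγ : ∀ v, ν (γ v) = ν v)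
    (hcell : ∀ i, ∀ v ∈ Vc i, Vc i = {v, γ v}) : IsWeightEquitable G ν Vc := by
  intro i j u hu u' hu'
  rw [hcell i u hu, mem_insert, mem_singleton] at hu'
  rcases hu' with rfl | rfl
  · rfl
  · exact (wInt_iso_apply γ hνγ (apply_mem_of_cells_eq_pair hcell j) u).symm

end Automorphism

section Cograph

variable [Fintype V] [DecidableEq V] {G : SimpleGraph V} [DecidableRel G.Adj] {ν : V → ℝ}

lemma wInt_pair (ν : V → ℝ) {w w' : V} (hw : w ≠ w') (u : V) :
    wInt G ν {w, w'} u =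
      ((if G.Adj u w then ν w else 0) + (if G.Adj u w' then ν w' else 0)) / ν u := by
  rw [wInt, sum_pair hw]

lemma eq_of_adj_of_wInt_pair_eq (hν : ∀ v, 0 < ν v) {u u' : V} (hadj : G.Adj u u')
    (h : wInt G ν {u, u'} u = wInt G ν {u, u'} u') : ν u = ν u' := by
  rw [wInt_pair ν hadj.ne, wInt_pair ν hadj.ne,
    div_eq_div_iff (hν u).ne' (hν u').ne'] at h
  simp only [G.irrefl, hadj, hadj.symm, if_true, if_false, zero_add, add_zero] at h
  nlinarith [hν u, hν u']

lemma IsCograph.adj_of_adj_of_wInt_pair_eq (hcog : IsCograph G) (hν : ∀ v, 0 < ν v)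
    {u u' w w' : V} (hu : u ≠ u') (hw : w ≠ w')
    (huw : u ≠ w) (huw' : u ≠ w') (hu'w : u' ≠ w) (hu'w' : u' ≠ w')
    (hP : wInt G ν {u, u'} u = wInt G ν {u, u'} u')
    (hQ : wInt G ν {w, w'} w = wInt G ν {w, w'} w')
    (hPQ : wInt G ν {w, w'} u = wInt G ν {w, w'} u')
    (hQP : wInt G ν {u, u'} w = wInt G ν {u, u'} w')
    (hadj : G.Adj u w) : G.Adj u' w' := by
  by_contra hd
  rw [wInt_pair ν hw, wInt_pair ν hw, div_eq_div_iff (hν u).ne' (hν u').ne'] at hPQ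
  rw [wInt_pair ν hu, wInt_pair ν hu, div_eq_div_iff (hν w).ne' (hν w').ne'] at hQP
  simp only [G.adj_comm w, G.adj_comm w', hadj, hd, if_true, if_false, add_zero] at hPQ hQP
  have pu := hν u; have pu' := hν u'; have pw := hν w; have pw' := hν w'
  have hc : G.Adj u' w := by
    by_contra hc
    simp only [hc, if_false, zero_mul] at hPQ
    split_ifs at hPQ <;> nlinarith
  have hb : G.Adj u w' := by
    by_contra hb
    simp only [hb, hc, if_true, if_false, zero_mul] at hQP
    nlinarith
  simp only [hb, hc, if_true] at hPQ hQP
  -- otherwise `w' u w u'` is an induced `P₄`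
  have hcenter : G.Adj u u' ∨ G.Adj w w' := by
    by_contra hno
    obtain ⟨hnu, hnw⟩ := not_or.mp hno
    exact hcog w' u w u' huw'.symm hw.symm hu'w'.symm huw hu hu'w.symm
      ⟨hb.symm, hadj, hc.symm, fun h => hnw h.symm, hnu, fun h => hd h.symm⟩
  rcases hcenter with huu | hww
  · rw [← eq_of_adj_of_wInt_pair_eq hν huu hP] at hPQ
    nlinarith
  · rw [← eq_of_adj_of_wInt_pair_eq hν hww hQ] at hQP
    nlinarith

variable {m : ℕ} {Vc : Fin m → Finset V}

lemma IsCograph.adj_apply_of_isWeightEquitable (hcog : IsCograph G) (hν : ∀ v, 0 < ν v)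
    (hpart : IsPartition Vc) (hwe : IsWeightEquitable G ν Vc) {g : V → V} (hg : ∀ v, g v ≠ v)
    (hinv : Function.Involutive g) (hcell : ∀ i, ∀ v ∈ Vc i, Vc i = {v, g v}) {x y : V}
    (hxy : G.Adj x y) : G.Adj (g x) (g y) := by
  obtain ⟨i, hx, -⟩ := hpart x
  obtain ⟨j, hy, -⟩ := hpart y
  have hgx := apply_mem_of_cells_eq_pair hcell i x hx
  have hgy := apply_mem_of_cells_eq_pair hcell j y hy
  by_cases hyi : y ∈ Vc i
  · rw [hcell i x hx, mem_insert, mem_singleton] at hyi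
    rcases hyi with rfl | rfl
    · exact absurd hxy G.irrefl
    · rw [hinv]
      exact hxy.symm
  have hgyi : g y ∉ Vc i := fun h => hyi (hinv y ▸ apply_mem_of_cells_eq_pair hcell i _ h)
  have hne : ∀ a ∈ Vc i, ∀ b ∉ Vc i, a ≠ b := fun a ha b hb h => hb (h ▸ ha)
  refine hcog.adj_of_adj_of_wInt_pair_eq hν (hg x).symm (hg y).symm (hne x hx y hyi)
    (hne x hx _ hgyi) (hne _ hgx y hyi) (hne _ hgx _ hgyi) ?_ ?_ ?_ ?_ hxy
  · rw [← hcell i x hx]; exact hwe i i x hx _ hgx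
  · rw [← hcell j y hy]; exact hwe j j y hy _ hgy
  · rw [← hcell j y hy]; exact hwe i j x hx _ hgx
  · rw [← hcell i x hx]; exact hwe j i y hy _ hgy

lemma IsCograph.exists_iso_of_isWeightEquitable (hcog : IsCograph G) (hν : ∀ v, 0 < ν v)
    (hpart : IsPartition Vc) (hc2 : ∀ i, #(Vc i) = 2) (hwe : IsWeightEquitable G ν Vc) :
    ∃ γ : G ≃g G, (∀ v, γ v ≠ v) ∧ (∀ v, γ (γ v) = v) ∧ ∀ i, ∀ v ∈ Vc i, Vc i = {v, γ v} := by
  obtain ⟨g, hg, hinv, hcell⟩ := hpart.exists_partner hc2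
  have hmap : ∀ {x y}, G.Adj x y → G.Adj (g x) (g y) :=
    hcog.adj_apply_of_isWeightEquitable hν hpart hwe hg hinv hcell
  refine ⟨⟨hinv.toPerm g, fun {x y} => ⟨fun h => ?_, hmap⟩⟩, hg, hinv, hcell⟩
  simpa [hinv x, hinv y] using hmap h

end Cograph

/-- A connected cograph has a fixed-point-free involutionary automorphism iff it admits a
weight-equitable partition into `n/2` cells of size `2`; moreover any such partition is
automatically equitable. -/
theorem cograph_fixedPointFree_involution_iff_weightEquitable_pairs
    [Fintype V] [DecidableEq V] (G : SimpleGraph V) [DecidableRel G.Adj]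
    (hG : G.Connected) (hcog : IsCograph G)
    (ν : V → ℝ) (lam : ℝ)
    (hν : ∀ v, 0 < ν v)
    (heig : (G.adjMatrix ℝ).mulVec ν = lam • ν) :
    ((∃ γ : G ≃g G, (∀ v, γ v ≠ v) ∧ (∀ v, γ (γ v) = v)) ↔
      ∃ (m : ℕ) (Vc : Fin m → Finset V), 2 * m = Fintype.card V ∧
        IsPartition Vc ∧ (∀ i, (Vc i).card = 2) ∧ IsWeightEquitable G ν Vc) ∧
    (∀ (m : ℕ) (Vc : Fin m → Finset V), 2 * m = Fintype.card V →
      IsPartition Vc → (∀ i, (Vc i).card = 2) → IsWeightEquitable G ν Vc →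
        IsEquitable G Vc) := by
  refine ⟨⟨fun ⟨γ, hfpf, hinv⟩ => ?_, fun ⟨m, Vc, _, hpart, hc2, hwe⟩ => ?_⟩,
    fun m Vc _ hpart hc2 hwe => ?_⟩
  · obtain ⟨m, Vc, hm, hpart, hc2, hcell⟩ := exists_pair_partition hfpf hinv
    have hνγ : ν ∘ γ = ν := hG.comp_iso_eq_of_adjMatrix_mulVec_eq_smul hν heig γ
    exact ⟨m, Vc, hm, hpart, hc2, isWeightEquitable_of_cells_eq_pair γ (congrFun hνγ) hcell⟩
  · obtain ⟨γ, hfpf, hinv, -⟩ := hcog.exists_iso_of_isWeightEquitable hν hpart hc2 hwe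
    exact ⟨γ, hfpf, hinv⟩
  · obtain ⟨γ, -, -, hcell⟩ := hcog.exists_iso_of_isWeightEquitable hν hpart hc2 hwe
    exact isEquitable_of_cells_eq_pair γ hcell
end
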